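/- Fix positive integers m and n. Let 𝓘_m = {α ∈ ℕⁿ : |α| ≤ m}, N = #𝓘_m, v(x) = (e^{2⟨α+𝟏,x⟩})_{α∈𝓘_m} ∈ ℝᴺ for x ∈ ℝⁿ, and A = (A_α)_{α∈𝓘_m} with A_α = (1/(2π)ⁿ) · α!(m−|α|)!/m!. Then there exist an integer M ≥ N, points p₁,…,p_M ∈ ℝⁿ, and positive coefficients a₁,…,a_M > 0 such that A = Σ_{j=1}^M aⱼ v(pⱼ), the vectors v(p₁),…,v(p_M) span ℝᴺ, and moreover the points can be chosen so that v(p₁),…,v(p_N) are linearly independent; in particular the N×N matrix L with columns v(p₁),…,v(p_N) is invertible. -/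

import Mathlib

open Real

/-- The index set `𝓘_m = {α ∈ ℕⁿ : |α| ≤ m}`. -/
def IndexSet (m n : ℕ) : Type := {α : Fin n → ℕ // ∑ j, α j ≤ m}

/-- The moment-vector map `v(x) = (e^{2⟨α+𝟏,x⟩})_{α ∈ 𝓘_m}`. -/
noncomputable def vMap (m n : ℕ) (x : Fin n → ℝ) : IndexSet m n → ℝ :=
  fun α => Real.exp (2 * ∑ j, ((α.1 j : ℝ) + 1) * x j)

/-- The target moment data `A = (A_α)_{α ∈ 𝓘_m}`, `A_α = (2π)^{-n} α!(m−|α|)!/m!`. -/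
noncomputable def AVec (m n : ℕ) : IndexSet m n → ℝ :=
  fun α => (1 / (2 * π) ^ n) *
    ((∏ j, ((α.1 j).factorial : ℝ)) * ((m - ∑ j, α.1 j).factorial : ℝ)
      / (m.factorial : ℝ))

/-!
Up to the factor `(2π)ⁿ m!`, the coordinate `A_α` is a product of Gamma integrals: the integral
over the positive orthant of `ℝⁿ⁺¹` of `y₀^(m-|α|) ∏ⱼ yⱼ^αⱼ e^{-Σ yᵢ}`. On the orthant this
integrand is a positive weight times `v(x)_α` with `xⱼ = log (yⱼ / y₀) / 2`. So a linear functional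
that is nonnegative on every `v(x)` and nonpositive at `A` integrates a nonnegative continuous
function to something `≤ 0`; it therefore vanishes on every `v(x)`, and since the `v(x)` span
(distinct exponential characters are linearly independent), it is zero. By Hahn–Banach, `A` is then
an interior point of the cone of positive combinations of the `v(x)`. If `v(p₁), …, v(p_N)` is a
basis, `A - ε Σᵢ v(pᵢ)` stays in that cone for small `ε > 0`, which is the required representation.
-/

open MeasureTheory Set Submodule Module

lemma nonneg_of_forall_lt_add_mul {a b c : ℝ} (h : ∀ t : ℝ, 0 < t → c < a + t * b) : 0 ≤ b := by
  by_contra! hb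
  have ht : 0 < (|a - c| + 1) / -b := div_pos (by positivity) (neg_pos.2 hb)
  have htb : (|a - c| + 1) / -b * -b = |a - c| + 1 := div_mul_cancel₀ _ (neg_ne_zero.2 hb.ne)
  linarith [h _ ht, le_abs_self (a - c)]

lemma nonpos_of_forall_lt_mul {a c : ℝ} (h : ∀ s : ℝ, 0 < s → c < s * a) : c ≤ 0 := by
  by_contra! hc
  rcases le_or_gt a 0 with ha | ha
  · linarith [h 1 one_pos]
  · have := h (c / a) (by positivity)
    rw [div_mul_cancel₀ c ha.ne'] at this
    exact lt_irrefl c this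

lemma span_range_eq_top_of_linearIndependent_swap {X ι K : Type*} [Field K] [Fintype ι]
    {v : X → ι → K} (hv : LinearIndependent K fun i x => v x i) : span K (range v) = ⊤ := by
  classical
  by_contra hne
  obtain ⟨φ, hφ, hker⟩ := (span K (range v)).exists_le_ker_of_lt_top (lt_top_iff_ne_top.2 hne)
  set c : ι → K := fun i => φ fun j => if i = j then 1 else 0
  have hφc (y : ι → K) : φ y = ∑ i, c i * y i := by
    simpa [c, mul_comm] using φ.pi_apply_eq_sum_univ y
  have hc : c = 0 := funext <| Fintype.linearIndependent_iff.1 hv c <| funext fun x => by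
    simpa [hφc, mul_comm] using hker (subset_span (mem_range_self x))
  exact hφ (LinearMap.ext fun y => by simp [hφc, hc])

lemma eqOn_zero_of_setIntegral_nonpos {X : Type*} [TopologicalSpace X] [MeasurableSpace X]
    [OpensMeasurableSpace X] {μ : Measure X} [μ.IsOpenPosMeasure] {U : Set X} {g : X → ℝ}
    (hU : IsOpen U) (hg : ContinuousOn g U) (hgi : IntegrableOn g U μ)
    (hg0 : ∀ x ∈ U, 0 ≤ g x) (h : ∫ x in U, g x ∂μ ≤ 0) : EqOn g 0 U := by
  have hae : g =ᵐ[μ.restrict U] 0 :=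
    (integral_eq_zero_iff_of_nonneg_ae (ae_restrict_of_forall_mem hU.measurableSet hg0) hgi).1
      (le_antisymm h (setIntegral_nonneg hU.measurableSet hg0))
  exact Measure.eqOn_open_of_ae_eq hae hU hg continuousOn_const

lemma integrableOn_Ioi_pow_mul_exp_neg (k : ℕ) :
    IntegrableOn (fun t : ℝ => t ^ k * exp (-t)) (Ioi 0) :=
  (GammaIntegral_convergent (s := k + 1) (by positivity)).congr_fun
    (fun t _ => by simp [mul_comm]) measurableSet_Ioi

lemma integral_Ioi_pow_mul_exp_neg (k : ℕ) : ∫ t in Ioi 0, t ^ k * exp (-t) = k.factorial := by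
  rw [← Gamma_nat_eq_factorial, Gamma_eq_integral (by positivity)]
  exact setIntegral_congr_fun measurableSet_Ioi fun t _ => by simp [mul_comm]

def posOrthant (ι : Type*) : Set (ι → ℝ) := univ.pi fun _ => Ioi 0

lemma isOpen_posOrthant (ι : Type*) [Finite ι] : IsOpen (posOrthant ι) :=
  isOpen_set_pi finite_univ fun _ _ => isOpen_Ioi

lemma volume_restrict_posOrthant (ι : Type*) [Fintype ι] :
    volume.restrict (posOrthant ι) = Measure.pi fun _ => volume.restrict (Ioi 0) := by
  rw [posOrthant, volume_pi, Measure.restrict_pi_pi]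

section PosCombinations

variable {ι E : Type*} [NormedAddCommGroup E] [NormedSpace ℝ E] {v : ι → E}

variable (v) in
def posCombinations : Set E :=
  {w | ∃ (K : ℕ) (q : Fin K → ι) (b : Fin K → ℝ), (∀ k, 0 < b k) ∧ w = ∑ k, b k • v (q k)}

lemma mem_posCombinations (i : ι) : v i ∈ posCombinations v :=
  ⟨1, fun _ => i, fun _ => 1, fun _ => one_pos, by simp⟩

lemma zero_mem_posCombinations : (0 : E) ∈ posCombinations v :=
  ⟨0, Fin.elim0, Fin.elim0, Fin.rec0, by simp⟩

lemma add_mem_posCombinations {x y : E} (hx : x ∈ posCombinations v)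
    (hy : y ∈ posCombinations v) : x + y ∈ posCombinations v := by
  obtain ⟨K₁, q₁, b₁, hb₁, rfl⟩ := hx
  obtain ⟨K₂, q₂, b₂, hb₂, rfl⟩ := hy
  refine ⟨K₁ + K₂, Fin.append q₁ q₂, Fin.append b₁ b₂,
    Fin.addCases (fun i => by simpa using hb₁ i) (fun i => by simpa using hb₂ i), ?_⟩
  simp [Fin.sum_univ_add]

lemma smul_mem_posCombinations {t : ℝ} (ht : 0 ≤ t) {x : E} (hx : x ∈ posCombinations v) :
    t • x ∈ posCombinations v := by
  rcases ht.eq_or_lt with rfl | ht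
  · simpa using zero_mem_posCombinations
  obtain ⟨K, q, b, hb, rfl⟩ := hx
  exact ⟨K, q, fun k => t * b k, fun k => mul_pos ht (hb k), by simp [Finset.smul_sum, smul_smul]⟩

lemma convex_posCombinations : Convex ℝ (posCombinations v) :=
  fun _ hx _ hy _ _ ha hb _ =>
    add_mem_posCombinations (smul_mem_posCombinations ha hx) (smul_mem_posCombinations hb hy)

lemma add_mem_interior_posCombinations {x y : E} (hx : x ∈ interior (posCombinations v))
    (hy : y ∈ posCombinations v) : x + y ∈ interior (posCombinations v) := by
  refine interior_maximal ?_ (isOpen_interior.add_right (t := {y})) (add_mem_add hx rfl)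
  rintro _ ⟨z, hz, _, rfl, rfl⟩
  exact add_mem_posCombinations (interior_subset hz) hy

lemma smul_mem_interior_posCombinations {t : ℝ} (ht : 0 < t) {x : E}
    (hx : x ∈ interior (posCombinations v)) : t • x ∈ interior (posCombinations v) := by
  have hsmul := interior_smul₀ ht.ne' (posCombinations v)
  refine interior_mono ?_ (hsmul ▸ smul_mem_smul_set hx)
  rintro _ ⟨y, hy, rfl⟩
  exact smul_mem_posCombinations ht.le hy

lemma interior_posCombinations_nonempty [FiniteDimensional ℝ E] (hv : span ℝ (range v) = ⊤) :
    (interior (posCombinations v)).Nonempty := by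
  rw [convex_posCombinations.interior_nonempty_iff_affineSpan_eq_top,
    AffineSubspace.affineSpan_eq_top_iff_vectorSpan_eq_top_of_nonempty ℝ _ _
      ⟨0, zero_mem_posCombinations⟩, eq_top_iff, ← hv, vectorSpan_def]
  refine span_mono ?_
  rintro _ ⟨i, rfl⟩
  exact ⟨v i, mem_posCombinations i, 0, zero_mem_posCombinations,
    (vsub_eq_sub _ _).trans (sub_zero _)⟩

theorem mem_interior_posCombinations [FiniteDimensional ℝ E] (hv : span ℝ (range v) = ⊤) {A : E}
    (hA : ∀ f : StrongDual ℝ E, (∀ i, 0 ≤ f (v i)) → f A ≤ 0 → f = 0) :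
    A ∈ interior (posCombinations v) := by
  by_contra hAC
  obtain ⟨f, hf⟩ :=
    geometric_hahn_banach_point_open convex_posCombinations.interior isOpen_interior hAC
  obtain ⟨z, hz⟩ := interior_posCombinations_nonempty hv
  have hfv (i : ι) : 0 ≤ f (v i) := nonneg_of_forall_lt_add_mul fun t ht => by
    simpa using hf _ (add_mem_interior_posCombinations hz
      (smul_mem_posCombinations ht.le (mem_posCombinations i)))
  have hfA : f A ≤ 0 := nonpos_of_forall_lt_mul fun s hs => by
    simpa using hf _ (smul_mem_interior_posCombinations hs hz)
  simpa [hA f hfv hfA] using hf z hz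

theorem exists_append_posCombination {A : E} (hA : A ∈ interior (posCombinations v)) {N : ℕ}
    (u : Fin N → ι) :
    ∃ (K : ℕ) (q : Fin K → ι) (a : Fin (N + K) → ℝ),
      (∀ j, 0 < a j) ∧ A = ∑ j, a j • v (Fin.append u q j) := by
  set S := ∑ i, v (u i)
  have hcont : Continuous fun ε : ℝ => A - ε • S := by fun_prop
  have hev : ∀ᶠ ε in nhdsWithin (0 : ℝ) (Ioi 0), A - ε • S ∈ interior (posCombinations v) :=
    tendsto_nhdsWithin_of_tendsto_nhds (by simpa using hcont.tendsto 0)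
      |>.eventually (isOpen_interior.mem_nhds hA)
  obtain ⟨ε, hεA, hε⟩ := (hev.and self_mem_nhdsWithin).exists
  obtain ⟨K, q, b, hb, hsum⟩ := interior_subset hεA
  refine ⟨K, q, Fin.append (fun _ => ε) b,
    Fin.addCases (fun _ => by simpa using hε) (fun i => by simpa using hb i), ?_⟩
  simp [Fin.sum_univ_add, ← hsum, S, Finset.smul_sum]

lemma exists_linearIndependent_comp [FiniteDimensional ℝ E] (hv : span ℝ (range v) = ⊤) :
    ∃ u : Fin (finrank ℝ E) → ι, LinearIndependent ℝ (v ∘ u) := by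
  obtain ⟨w, hw, -, hli⟩ := exists_fun_fin_finrank_span_eq ℝ (range v)
  choose u hu using hw
  have hrank : finrank ℝ (span ℝ (range v)) = finrank ℝ E := by rw [hv, finrank_top]
  refine ⟨u ∘ Fin.cast hrank.symm, ?_⟩
  rw [← Function.comp_assoc, show v ∘ u = w from funext hu]
  exact hli.comp _ (Fin.cast_injective _)

theorem exists_posCombination_extending_basis [FiniteDimensional ℝ E]
    (hv : span ℝ (range v) = ⊤) {A : E} (hA : A ∈ interior (posCombinations v)) {N : ℕ}
    (hN : finrank ℝ E = N) :
    ∃ (M : ℕ) (hNM : N ≤ M) (p : Fin M → ι) (a : Fin M → ℝ),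
      (∀ j, 0 < a j) ∧ A = ∑ j, a j • v (p j) ∧
      span ℝ (range fun j => v (p j)) = ⊤ ∧
      LinearIndependent ℝ (fun i : Fin N => v (p (Fin.castLE hNM i))) := by
  subst hN
  obtain ⟨u, hu⟩ := exists_linearIndependent_comp hv
  obtain ⟨K, q, a, ha, hA⟩ := exists_append_posCombination hA u
  have hspan : span ℝ (range (v ∘ u)) = ⊤ := hu.span_eq_top_of_card_eq_finrank' (by simp)
  refine ⟨_, Nat.le_add_right _ K, Fin.append u q, a, ha, hA, ?_,
    by simpa [Function.comp_def] using hu⟩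
  refine eq_top_iff.2 (hspan ▸ span_mono ?_)
  rintro _ ⟨i, rfl⟩
  exact ⟨Fin.castAdd K i, by simp⟩

end PosCombinations

noncomputable instance (m n : ℕ) : Fintype (IndexSet m n) :=
  have : Finite (IndexSet m n) := Finite.of_injective
    (fun α j => (⟨α.1 j, Nat.lt_succ_of_le <|
      (Finset.single_le_sum (fun _ _ => Nat.zero_le _) (Finset.mem_univ j)).trans α.2⟩ :
        Fin (m + 1)))
    fun α β h => Subtype.ext <| funext fun j => by simpa using congrFun h j
  Fintype.ofFinite _

lemma vMap_add (m n : ℕ) (x y : Fin n → ℝ) : vMap m n (x + y) = vMap m n x * vMap m n y := by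
  ext α
  simp only [vMap, Pi.add_apply, Pi.mul_apply, ← Real.exp_add, mul_add, Finset.sum_add_distrib]

noncomputable def vMapChar (m n : ℕ) (α : IndexSet m n) : Multiplicative (Fin n → ℝ) →* ℝ where
  toFun x := vMap m n x.toAdd α
  map_one' := by simp [vMap]
  map_mul' x y := congrFun (vMap_add m n x.toAdd y.toAdd) α

lemma vMapChar_injective (m n : ℕ) : Function.Injective (vMapChar m n) := by
  intro α β h
  refine Subtype.ext <| funext fun j => ?_
  have hj := DFunLike.congr_fun h (Multiplicative.ofAdd (Pi.single j 1))
  simp only [vMapChar, vMap, MonoidHom.coe_mk, OneHom.coe_mk, toAdd_ofAdd, Pi.single_apply,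
    mul_ite, mul_one, mul_zero, Finset.sum_ite_eq', Finset.mem_univ, if_true] at hj
  have := Real.exp_injective hj
  exact_mod_cast (by linarith : (α.1 j : ℝ) = β.1 j)

theorem span_range_vMap (m n : ℕ) : span ℝ (range (vMap m n)) = ⊤ :=
  span_range_eq_top_of_linearIndependent_swap <|
    (linearIndependent_monoidHom (Multiplicative (Fin n → ℝ)) ℝ).comp _ (vMapChar_injective m n)

def momentExponents {m n : ℕ} (α : IndexSet m n) : Fin (n + 1) → ℕ :=
  Fin.cons (m - ∑ j, α.1 j) α.1

noncomputable def momentDensity (m n : ℕ) (y : Fin (n + 1) → ℝ) : IndexSet m n → ℝ :=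
  fun α => ∏ i, y i ^ momentExponents α i * exp (-y i)

lemma continuous_momentDensity (m n : ℕ) : Continuous (momentDensity m n) := by
  unfold momentDensity; fun_prop

lemma integrableOn_momentDensity (m n : ℕ) :
    IntegrableOn (momentDensity m n) (posOrthant (Fin (n + 1))) := by
  refine Integrable.of_eval fun α => ?_
  rw [volume_restrict_posOrthant]
  exact Integrable.fintype_prod fun i => integrableOn_Ioi_pow_mul_exp_neg _

lemma setIntegral_momentDensity (m n : ℕ) :
    ∫ y in posOrthant (Fin (n + 1)), momentDensity m n y
      = ((2 * π) ^ n * m.factorial) • AVec m n := by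
  ext α
  rw [eval_integral (integrableOn_momentDensity m n).eval, volume_restrict_posOrthant]
  simp only [momentDensity]
  rw [integral_fintype_prod_eq_prod fun i t => t ^ momentExponents α i * exp (-t)]
  simp only [integral_Ioi_pow_mul_exp_neg, Fin.prod_univ_succ, momentExponents, Fin.cons_zero,
    Fin.cons_succ, AVec, Pi.smul_apply, smul_eq_mul]
  field_simp

lemma vMap_half_log (m n : ℕ) {r : Fin n → ℝ} (hr : ∀ j, 0 < r j) (α : IndexSet m n) :
    vMap m n (fun j => log (r j) / 2) α = ∏ j, r j ^ (α.1 j + 1) := by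
  rw [vMap, Finset.mul_sum, exp_sum]
  refine Finset.prod_congr rfl fun j _ => ?_
  rw [show 2 * ((α.1 j + 1 : ℝ) * (log (r j) / 2)) = ((α.1 j + 1 : ℕ) : ℝ) * log (r j) by
    push_cast; ring, exp_nat_mul, exp_log (hr j)]

lemma momentDensity_eq_smul_vMap (m n : ℕ) {y : Fin (n + 1) → ℝ}
    (hy : y ∈ posOrthant (Fin (n + 1))) :
    ∃ w : ℝ, 0 < w ∧ momentDensity m n y = w • vMap m n (fun j => log (y j.succ / y 0) / 2) := by
  have hpos : ∀ i, 0 < y i := fun i => hy i (mem_univ i)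
  have hy0 := hpos 0
  have hprod : 0 < ∏ j : Fin n, y j.succ := Finset.prod_pos fun j _ => hpos j.succ
  refine ⟨y 0 ^ (m + n) * exp (-∑ i, y i) / ∏ j : Fin n, y j.succ, by positivity, ?_⟩
  ext α
  have hα : ∑ j, α.1 j ≤ m := α.2
  rw [Pi.smul_apply, vMap_half_log m n (fun j => div_pos (hpos j.succ) hy0), momentDensity,
    Fin.prod_univ_succ, Finset.prod_mul_distrib, Fin.sum_univ_succ, neg_add, exp_add,
    ← Finset.sum_neg_distrib, exp_sum]
  simp only [momentExponents, Fin.cons_zero, Fin.cons_succ, div_pow, Finset.prod_div_distrib,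
    pow_succ, Finset.prod_mul_distrib, Finset.prod_pow_eq_pow_sum, Finset.prod_const,
    Finset.card_univ, Fintype.card_fin, smul_eq_mul]
  rw [show m + n = (m - ∑ j, α.1 j) + ∑ j, α.1 j + n by omega, pow_add, pow_add]
  field_simp

theorem eq_zero_of_nonneg_vMap_of_AVec_nonpos (m n : ℕ) (f : StrongDual ℝ (IndexSet m n → ℝ))
    (hf : ∀ p, 0 ≤ f (vMap m n p)) (hA : f (AVec m n) ≤ 0) : f = 0 := by
  have hf_density : ∀ y ∈ posOrthant (Fin (n + 1)), 0 ≤ f (momentDensity m n y) := by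
    intro y hy
    obtain ⟨w, hw, hwy⟩ := momentDensity_eq_smul_vMap m n hy
    rw [hwy, map_smul, smul_eq_mul]
    exact mul_nonneg hw.le (hf _)
  have hint : ∫ y in posOrthant (Fin (n + 1)), f (momentDensity m n y) ≤ 0 := by
    rw [f.integral_comp_comm (integrableOn_momentDensity m n), setIntegral_momentDensity,
      map_smul, smul_eq_mul]
    exact mul_nonpos_of_nonneg_of_nonpos (by positivity) hA
  have hzero := eqOn_zero_of_setIntegral_nonpos (isOpen_posOrthant _)
    (f.continuous.comp (continuous_momentDensity m n)).continuousOn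
    (f.integrable_comp (integrableOn_momentDensity m n)) hf_density hint
  have hvanish (p : Fin n → ℝ) : f (vMap m n p) = 0 := by
    set y : Fin (n + 1) → ℝ := Fin.cons 1 fun j => exp (2 * p j)
    have hy : y ∈ posOrthant (Fin (n + 1)) := fun i _ => by
      refine Fin.cases ?_ (fun j => ?_) i <;> simp [y, exp_pos]
    obtain ⟨w, hw, hwy⟩ := momentDensity_eq_smul_vMap m n hy
    have hp : (fun j => log (y j.succ / y 0) / 2) = p := by
      funext j; simp [y]
    have := hzero hy
    rw [Function.comp_apply, hwy, hp, map_smul, smul_eq_mul] at this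
    exact (mul_eq_zero.1 this).resolve_left hw.ne'
  exact ContinuousLinearMap.coe_injective <|
    LinearMap.ext_on_range (span_range_vMap m n) (by simpa using hvanish)

lemma AVec_mem_interior_posCombinations (m n : ℕ) :
    AVec m n ∈ interior (posCombinations (vMap m n)) :=
  mem_interior_posCombinations (span_range_vMap m n) (eq_zero_of_nonneg_vMap_of_AVec_nonpos m n)

theorem stmt5_general (m n : ℕ) :
    ∃ (M : ℕ) (hNM : Nat.card (IndexSet m n) ≤ M)
      (p : Fin M → (Fin n → ℝ)) (a : Fin M → ℝ),
      (∀ j, 0 < a j) ∧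
      AVec m n = ∑ j, a j • vMap m n (p j) ∧
      Submodule.span ℝ (Set.range fun j => vMap m n (p j)) = ⊤ ∧
      LinearIndependent ℝ
        (fun i : Fin (Nat.card (IndexSet m n)) => vMap m n (p (Fin.castLE hNM i))) :=
  exists_posCombination_extending_basis (span_range_vMap m n)
    (AVec_mem_interior_posCombinations m n) (by simp [Nat.card_eq_fintype_card])

/-- With `N = #𝓘_m`, there are `M ≥ N` points `p₁,…,p_M ∈ ℝⁿ` and
positive coefficients `a₁,…,a_M` with `A = Σⱼ aⱼ v(pⱼ)`, such that `v(p₁),…,v(p_M)`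
span `ℝᴺ` and the first `N` of them, `v(p₁),…,v(p_N)`, are linearly independent
(so the `N×N` matrix with these columns is invertible). -/
theorem stmt5 (m n : ℕ) (hm : 0 < m) (hn : 0 < n) :
    ∃ (M : ℕ) (hNM : Nat.card (IndexSet m n) ≤ M)
      (p : Fin M → (Fin n → ℝ)) (a : Fin M → ℝ),
      (∀ j, 0 < a j) ∧
      AVec m n = ∑ j, a j • vMap m n (p j) ∧
      Submodule.span ℝ (Set.range fun j => vMap m n (p j)) = ⊤ ∧
      LinearIndependent ℝ
        (fun i : Fin (Nat.card (IndexSet m n)) => vMap m n (p (Fin.castLE hNM i))) :=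
  stmt5_general m n
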